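/- Let Φ be a ℂ-linear endomorphism of the space of d×d complex matrices (indexed by Fin dA × Fin dB) that is diagonalizable with all eigenvalues nonzero, let Λ ⊂ ℂ be its (finite) set of eigenvalues, and let m be the cardinality of the set {λ·μ : λ, μ ∈ Λ} of pairwise products of eigenvalues. If a density matrix ρ satisfies [ρ, (Tr_B ρ) ⊗ I_{dB}] ≠ 0, then for every natural number N there exists n with N < n ≤ N + m such that [Φ^n(ρ), (Tr_B Φ^n(ρ)) ⊗ I_{dB}] ≠ 0: among any m consecutive times, at least one evolved state lies outside C₀. -/

import Mathlib

/-! The commutator `[Φⁿρ, (Tr_B Φⁿρ) ⊗ I]` is a quadratic expression in `Φⁿρ`. Expanding `ρ` in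
an eigenbasis of `Φ` turns it into an exponential sum `∑_{s ∈ S} sⁿ • w s` over the set `S` of
pairwise products of eigenvalues, which has at most `m` elements, none of them zero. If the sum
vanished at `m` consecutive times, Lagrange interpolation on `S` (equivalently, invertibility of
the Vandermonde matrix of `S`) would force every `w s = 0`, so the commutator would vanish at
`n = 0` as well, i.e. for `ρ` itself. -/

open Matrix MeasureTheory
open scoped Kronecker ComplexOrder

/-- A density matrix: positive semidefinite with unit trace. -/
def IsDensityMatrix {n : Type*} [Fintype n] (ρ : Matrix n n ℂ) : Prop :=
  ρ.PosSemidef ∧ ρ.trace = 1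

/-- Partial trace over the second subsystem. -/
noncomputable def ptraceB {dA dB : ℕ} (ρ : Matrix (Fin dA × Fin dB) (Fin dA × Fin dB) ℂ) :
    Matrix (Fin dA) (Fin dA) ℂ :=
  Matrix.of fun a a' => ∑ b, ρ (a, b) (a', b)

/-- Zero-discord (classical-quantum) states: block diagonal in some
orthonormal local basis of the first subsystem. -/
def IsZeroDiscord {dA dB : ℕ} (ρ : Matrix (Fin dA × Fin dB) (Fin dA × Fin dB) ℂ) : Prop :=
  ∃ (v : Fin dA → (Fin dA → ℂ)) (p : Fin dA → ℝ)
    (σ : Fin dA → Matrix (Fin dB) (Fin dB) ℂ),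
      (∀ j k, star (v j) ⬝ᵥ v k = if j = k then 1 else 0) ∧
      (∀ j, 0 ≤ p j) ∧ (∑ j, p j = 1) ∧
      (∀ j, IsDensityMatrix (σ j)) ∧
      ρ = ∑ j, (p j : ℂ) • (Matrix.vecMulVec (v j) (star (v j)) ⊗ₖ σ j)

open Finset Polynomial

section ExponentialSums

variable {K V : Type*} [Field K] [AddCommGroup V] [Module K V]

theorem Finset.eq_zero_of_forall_sum_pow_smul_eq_zero {S : Finset K} {u : K → V}
    (h : ∀ k < #S, ∑ s ∈ S, s ^ k • u s = 0) {t : K} (ht : t ∈ S) : u t = 0 := by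
  classical
  set p := Lagrange.basis S id t
  have hdeg : p.natDegree < #S := by
    rw [Lagrange.natDegree_basis (Set.injOn_id _) ht]
    have := card_pos.2 ⟨t, ht⟩
    omega
  calc u t = ∑ s ∈ S, p.eval s • u s := by
        rw [sum_eq_single_of_mem t ht fun s hs hst => by
          rw [show p.eval s = 0 from Lagrange.eval_basis_of_ne (v := id) hst.symm hs, zero_smul]]
        rw [show p.eval t = 1 from Lagrange.eval_basis_self (Set.injOn_id _) ht, one_smul]
    _ = ∑ k ∈ range #S, p.coeff k • ∑ s ∈ S, s ^ k • u s := by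
        simp_rw [eval_eq_sum_range' hdeg, sum_smul, smul_sum, smul_smul]
        exact sum_comm
    _ = 0 := sum_eq_zero fun k hk => by rw [h k (mem_range.1 hk), smul_zero]

theorem Finset.eq_zero_of_sum_pow_smul_eq_zero_of_consecutive {S : Finset K} (hS : (0 : K) ∉ S)
    {w : K → V} (N : ℕ) (h : ∀ n, N < n → n ≤ N + #S → ∑ s ∈ S, s ^ n • w s = 0)
    {t : K} (ht : t ∈ S) : w t = 0 := by
  have hshift : t ^ (N + 1) • w t = 0 :=
    eq_zero_of_forall_sum_pow_smul_eq_zero (u := fun s => s ^ (N + 1) • w s)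
      (fun k hk => by
        simpa [smul_smul, ← pow_add, add_comm k] using h (k + (N + 1)) (by omega) (by omega)) ht
  exact (smul_eq_zero.1 hshift).resolve_left (pow_ne_zero _ (ne_of_mem_of_not_mem ht hS))

end ExponentialSums

section Diagonalizable

variable {K V W ι : Type*} [Field K] [AddCommGroup V] [Module K V] [AddCommGroup W] [Module K W]
  {Φ : Module.End K V} {b : Module.Basis ι K V} {ev : ι → K}

def Module.End.eigenvalueProducts (Φ : Module.End K V) : Set K :=
  {x | ∃ lam mu : K, Φ.HasEigenvalue lam ∧ Φ.HasEigenvalue mu ∧ x = lam * mu}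

theorem Module.End.finite_eigenvalueProducts [FiniteDimensional K V] (Φ : Module.End K V) :
    Φ.eigenvalueProducts.Finite :=
  (Φ.finite_hasEigenvalue.image2 (· * ·) Φ.finite_hasEigenvalue).subset
    fun _ ⟨lam, mu, hlam, hmu, hx⟩ => ⟨lam, hlam, mu, hmu, hx.symm⟩

theorem Module.Basis.hasEigenvector_of_apply_eq_smul (hb : ∀ i, Φ (b i) = ev i • b i) (i : ι) :
    Φ.HasEigenvector (ev i) (b i) :=
  ⟨Module.End.mem_eigenspace_iff.mpr (hb i), b.ne_zero i⟩

theorem Module.Basis.mul_mem_eigenvalueProducts (hb : ∀ i, Φ (b i) = ev i • b i) (i j : ι) :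
    ev i * ev j ∈ Φ.eigenvalueProducts :=
  ⟨_, _, Module.End.hasEigenvalue_of_hasEigenvector (b.hasEigenvector_of_apply_eq_smul hb i),
    Module.End.hasEigenvalue_of_hasEigenvector (b.hasEigenvector_of_apply_eq_smul hb j), rfl⟩

variable [Fintype ι]

theorem Module.Basis.pow_apply_of_apply_eq_smul (hb : ∀ i, Φ (b i) = ev i • b i) (n : ℕ)
    (x : V) : (Φ ^ n) x = ∑ i, (b.repr x i * ev i ^ n) • b i := by
  nth_rw 1 [← b.sum_repr x]
  simp only [map_sum, map_smul, (b.hasEigenvector_of_apply_eq_smul hb _).pow_apply, smul_smul,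
    mul_comm]

theorem Module.Basis.exists_bilin_pow_apply_eq_sum_pow_smul [DecidableEq K]
    (hb : ∀ i, Φ (b i) = ev i • b i) (B : V →ₗ[K] V →ₗ[K] W) (x y : V) :
    ∃ w : K → W, ∀ n : ℕ, B ((Φ ^ n) x) ((Φ ^ n) y) =
      ∑ s ∈ univ.image (fun p : ι × ι => ev p.1 * ev p.2), s ^ n • w s := by
  refine ⟨fun s => ∑ p : ι × ι with ev p.1 * ev p.2 = s,
    (b.repr x p.1 * b.repr y p.2) • B (b p.1) (b p.2), fun n => ?_⟩
  have hfiber : ∀ s, ∀ p ∈ ({p : ι × ι | ev p.1 * ev p.2 = s} : Finset _),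
      s ^ n • (b.repr x p.1 * b.repr y p.2) • B (b p.1) (b p.2) =
        ((ev p.1 * ev p.2) ^ n * b.repr x p.1 * b.repr y p.2) • B (b p.1) (b p.2) := by
    intro s p hp
    rw [(mem_filter.1 hp).2, smul_smul, mul_assoc]
  simp_rw [smul_sum, sum_congr rfl (hfiber _)]
  rw [sum_fiberwise_of_maps_to fun p _ => mem_image_of_mem _ (mem_univ p), Fintype.sum_prod_type]
  simp only [b.pow_apply_of_apply_eq_smul hb, map_sum, map_smul, LinearMap.sum_apply,
    LinearMap.smul_apply, smul_sum, smul_smul]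
  rw [sum_comm]
  refine sum_congr rfl fun i _ => sum_congr rfl fun j _ => ?_
  rw [mul_pow]
  congr 1
  ring

end Diagonalizable

def LinearMap.commutatorBilin {R A : Type*} [CommSemiring R] [Ring A] [Algebra R A]
    (L : A →ₗ[R] A) : A →ₗ[R] A →ₗ[R] A :=
  (LinearMap.mul R A).compl₂ L - (LinearMap.mul R A).comp L

theorem LinearMap.commutatorBilin_apply {R A : Type*} [CommSemiring R] [Ring A] [Algebra R A]
    (L : A →ₗ[R] A) (X Y : A) : L.commutatorBilin X Y = X * L Y - L X * Y :=
  rfl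

noncomputable def ptraceBKronOne (dA dB : ℕ) :
    Matrix (Fin dA × Fin dB) (Fin dA × Fin dB) ℂ →ₗ[ℂ]
      Matrix (Fin dA × Fin dB) (Fin dA × Fin dB) ℂ where
  toFun X := ptraceB X ⊗ₖ (1 : Matrix (Fin dB) (Fin dB) ℂ)
  map_add' X Y := by
    ext ⟨a, b⟩ ⟨a', b'⟩
    simp [ptraceB, sum_add_distrib, add_mul]
  map_smul' c X := by
    ext ⟨a, b⟩ ⟨a', b'⟩
    simp [ptraceB, ← mul_sum, mul_assoc]

theorem trajectory_leaves_C0_within_m_steps_general (dA dB : ℕ)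
    (Φ : Module.End ℂ (Matrix (Fin dA × Fin dB) (Fin dA × Fin dB) ℂ))
    (hdiag : ∃ (ι : Type) (b : Module.Basis ι ℂ (Matrix (Fin dA × Fin dB) (Fin dA × Fin dB) ℂ))
      (ev : ι → ℂ), ∀ i, Φ (b i) = ev i • b i)
    (hev : ∀ lam : ℂ, Module.End.HasEigenvalue Φ lam → lam ≠ 0)
    (m : ℕ)
    (hm : m = Set.ncard {x : ℂ | ∃ lam mu : ℂ,
      Module.End.HasEigenvalue Φ lam ∧ Module.End.HasEigenvalue Φ mu ∧ x = lam * mu})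
    (ρ : Matrix (Fin dA × Fin dB) (Fin dA × Fin dB) ℂ)
    (hc : ρ * (ptraceB ρ ⊗ₖ (1 : Matrix (Fin dB) (Fin dB) ℂ)) ≠
      (ptraceB ρ ⊗ₖ (1 : Matrix (Fin dB) (Fin dB) ℂ)) * ρ) :
    ∀ N : ℕ, ∃ n : ℕ, N < n ∧ n ≤ N + m ∧
      (Φ ^ n) ρ * (ptraceB ((Φ ^ n) ρ) ⊗ₖ (1 : Matrix (Fin dB) (Fin dB) ℂ)) ≠
        (ptraceB ((Φ ^ n) ρ) ⊗ₖ (1 : Matrix (Fin dB) (Fin dB) ℂ)) * (Φ ^ n) ρ := by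
  intro N
  by_contra! hstay
  obtain ⟨ι, b, ev, hb⟩ := hdiag
  have := FiniteDimensional.fintypeBasisIndex b
  set S := univ.image fun p : ι × ι => ev p.1 * ev p.2
  obtain ⟨w, hw⟩ :=
    b.exists_bilin_pow_apply_eq_sum_pow_smul hb (ptraceBKronOne dA dB).commutatorBilin ρ ρ
  have hSP : (S : Set ℂ) ⊆ Φ.eigenvalueProducts := by
    simp only [S, coe_image, coe_univ, Set.image_univ, Set.range_subset_iff]
    exact fun p => b.mul_mem_eigenvalueProducts hb p.1 p.2
  have hS0 : (0 : ℂ) ∉ S := fun h0 => by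
    obtain ⟨lam, mu, hlam, hmu, h⟩ := hSP h0
    exact mul_ne_zero (hev lam hlam) (hev mu hmu) h.symm
  have hSm : #S ≤ m :=
    calc #S = (S : Set ℂ).ncard := (Set.ncard_coe_finset S).symm
      _ ≤ Φ.eigenvalueProducts.ncard := Set.ncard_le_ncard hSP Φ.finite_eigenvalueProducts
      _ = m := hm.symm
  have hw0 : ∀ s ∈ S, w s = 0 := fun s =>
    eq_zero_of_sum_pow_smul_eq_zero_of_consecutive hS0 N fun n hNn hnN => by
      rw [← hw n, LinearMap.commutatorBilin_apply, sub_eq_zero]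
      exact hstay n hNn (hnN.trans (by omega))
  have h0 : (ptraceBKronOne dA dB).commutatorBilin ρ ρ = 0 :=
    (hw 0).trans (sum_eq_zero fun s hs => by rw [hw0 s hs, smul_zero])
  exact hc (sub_eq_zero.1 h0)

/-- Let `Φ` be a diagonalizable linear endomorphism of the
space of bipartite matrices with all eigenvalues nonzero, and let `m` be the
number of distinct pairwise products of its eigenvalues. If a density matrix
`ρ` has nonvanishing commutator with its reduced state, then among any `m`
consecutive times at least one evolved state `Φ^n ρ` lies outside `C₀`. -/
theorem trajectory_leaves_C0_within_m_steps (dA dB : ℕ) (hdA : 0 < dA) (hdB : 0 < dB)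
    (Φ : Module.End ℂ (Matrix (Fin dA × Fin dB) (Fin dA × Fin dB) ℂ))
    (hdiag : ∃ (ι : Type) (b : Module.Basis ι ℂ (Matrix (Fin dA × Fin dB) (Fin dA × Fin dB) ℂ))
      (ev : ι → ℂ), ∀ i, Φ (b i) = ev i • b i)
    (hev : ∀ lam : ℂ, Module.End.HasEigenvalue Φ lam → lam ≠ 0)
    (m : ℕ)
    (hm : m = Set.ncard {x : ℂ | ∃ lam mu : ℂ,
      Module.End.HasEigenvalue Φ lam ∧ Module.End.HasEigenvalue Φ mu ∧ x = lam * mu})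
    (ρ : Matrix (Fin dA × Fin dB) (Fin dA × Fin dB) ℂ) (hρ : IsDensityMatrix ρ)
    (hc : ρ * (ptraceB ρ ⊗ₖ (1 : Matrix (Fin dB) (Fin dB) ℂ)) ≠
      (ptraceB ρ ⊗ₖ (1 : Matrix (Fin dB) (Fin dB) ℂ)) * ρ) :
    ∀ N : ℕ, ∃ n : ℕ, N < n ∧ n ≤ N + m ∧
      (Φ ^ n) ρ * (ptraceB ((Φ ^ n) ρ) ⊗ₖ (1 : Matrix (Fin dB) (Fin dB) ℂ)) ≠
        (ptraceB ((Φ ^ n) ρ) ⊗ₖ (1 : Matrix (Fin dB) (Fin dB) ℂ)) * (Φ ^ n) ρ :=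
  trajectory_leaves_C0_within_m_steps_general dA dB Φ hdiag hev m hm ρ hc
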